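/- If λ is an eigenvalue of the compression PAP|_M of a bounded operator A to a finite-dimensional subspace M ⊆ H, with eigenvector g ∈ M, ‖g‖ = 1, and λ ∈ ∂W(A) lies on the boundary of the numerical range of A, and the numerical range of the compression is a line segment with λ an endpoint, and M contains f and Af for some unit vector f with ⟨Af,f⟩ = λ, then λ is an eigenvalue of A. -/

import Mathlib

/-!
With `b` the other endpoint, every unit `u ∈ M` has `⟪u, A u⟫ - λ ∈ ℝ≥0 • (b - λ)`, so by
homogeneity `q x = ⟪x, (A - λ) x⟫` takes values in this ray on all of `M`, and `q f = 0`.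
For `y ∈ M` and `t ∈ ℂ`, `q (f + t y)` is `t ⟪f, (A - λ) y⟫ + conj t ⟪y, (A - λ) f⟫` plus a
term of order `|t|²`; letting `t` run over small real and small imaginary values, the ray
forces both first-order coefficients to vanish. Thus `(A - λ) f ⊥ M`; since `f, A f ∈ M`,
the vector `(A - λ) f` lies in `M` and is orthogonal to itself, so `A f = λ f`.
-/

open scoped ComplexInnerProductSpace

/-- The numerical range `W(A) = {⟨Af, f⟩ : ‖f‖ = 1}`. -/
def numericalRange {H : Type*} [NormedAddCommGroup H] [InnerProductSpace ℂ H]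
    (A : H →L[ℂ] H) : Set ℂ :=
  {z | ∃ f : H, ‖f‖ = 1 ∧ ⟪f, A f⟫ = z}

/-- The numerical range of the compression `PAP|_M` of `A` to a subspace `M`:
for `g ∈ M`, `⟨PAPg, g⟩ = ⟨Ag, g⟩`. -/
def compressionNumericalRange {H : Type*} [NormedAddCommGroup H]
    [InnerProductSpace ℂ H] (A : H →L[ℂ] H) (M : Submodule ℂ H) : Set ℂ :=
  {z | ∃ g ∈ M, ‖g‖ = 1 ∧ ⟪g, A g⟫ = z}

open ComplexConjugate

lemma eq_zero_of_forall_nonneg_mul_add_sq_mul {a b : ℝ} (h : ∀ ε : ℝ, 0 ≤ ε * a + ε ^ 2 * b) :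
    a = 0 := by
  have hdiscrim : discrim b a 0 ≤ 0 := discrim_le_zero fun ε => by linarith [h ε]
  rw [discrim] at hdiscrim
  exact pow_eq_zero_iff two_ne_zero |>.mp (le_antisymm (by linarith) (sq_nonneg a))

lemma eq_zero_of_forall_real_mul_add_sq_mul_eq_nonneg_mul {u v d : ℂ}
    (h : ∀ ε : ℝ, ∃ c : ℝ, 0 ≤ c ∧ ε * u + ε ^ 2 * v = c * d) : u = 0 := by
  -- `ε = ±1` makes `u` and `v` real multiples of `d`, reducing to the real case.
  obtain ⟨c₁, -, h₁⟩ := h 1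
  obtain ⟨c₂, -, h₂⟩ := h (-1)
  push_cast at h₁ h₂
  have hu : u = ((c₁ - c₂) / 2 : ℝ) * d := by push_cast; linear_combination (h₁ - h₂) / 2
  have hv : v = ((c₁ + c₂) / 2 : ℝ) * d := by push_cast; linear_combination (h₁ + h₂) / 2
  rcases eq_or_ne d 0 with rfl | hd
  · simpa using hu
  suffices (c₁ - c₂) / 2 = 0 by simp [hu, this]
  refine eq_zero_of_forall_nonneg_mul_add_sq_mul (b := (c₁ + c₂) / 2) fun ε => ?_
  obtain ⟨c, hc, hε⟩ := h ε
  rw [hu, hv] at hε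
  have : ((ε * ((c₁ - c₂) / 2) + ε ^ 2 * ((c₁ + c₂) / 2) : ℝ) : ℂ) = c :=
    mul_right_cancel₀ hd (by push_cast at hε ⊢; linear_combination hε)
  exact (Complex.ofReal_inj.mp this).symm ▸ hc

lemma eq_zero_of_forall_mul_add_conj_mul_add_conj_mul_mul_eq_nonneg_mul {p r s d : ℂ}
    (h : ∀ t : ℂ, ∃ c : ℝ, 0 ≤ c ∧ t * r + conj t * p + conj t * t * s = c * d) : p = 0 := by
  have hsum : r + p = 0 :=
    eq_zero_of_forall_real_mul_add_sq_mul_eq_nonneg_mul (v := s) (d := d) fun ε => by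
      obtain ⟨c, hc, hε⟩ := h ε
      exact ⟨c, hc, by rw [Complex.conj_ofReal] at hε; linear_combination hε⟩
  have hdiff : Complex.I * (r - p) = 0 :=
    eq_zero_of_forall_real_mul_add_sq_mul_eq_nonneg_mul (v := s) (d := d) fun ε => by
      obtain ⟨c, hc, hε⟩ := h (ε * Complex.I)
      refine ⟨c, hc, ?_⟩
      rw [map_mul, Complex.conj_ofReal, Complex.conj_I] at hε
      linear_combination hε + ε ^ 2 * s * Complex.I_sq
  have hdiff' : r - p = 0 := by simpa using hdiff
  linear_combination (hsum - hdiff') / 2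

section

variable {H : Type*} [NormedAddCommGroup H] [InnerProductSpace ℂ H]

lemma inner_sub_smul_self_eq_nonneg_mul_of_compressionNumericalRange_subset_segment
    {A : H →L[ℂ] H} {M : Submodule ℂ H} {lam b : ℂ}
    (hW : compressionNumericalRange A M ⊆ segment ℝ lam b) {x : H} (hx : x ∈ M) :
    ∃ c : ℝ, 0 ≤ c ∧ ⟪x, A x - lam • x⟫ = c * (b - lam) := by
  rcases eq_or_ne x 0 with rfl | hx0
  · exact ⟨0, le_rfl, by simp⟩
  have hx0' : ‖x‖ ≠ 0 := norm_ne_zero_iff.mpr hx0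
  set u := ((‖x‖⁻¹ : ℝ) : ℂ) • x
  have hu : ‖u‖ = 1 := by simp [u, norm_smul, hx0]
  have hxu : x = ((‖x‖ : ℝ) : ℂ) • u := by simp [u, smul_smul, hx0']
  have hmem : ⟪u, A u⟫ ∈ segment ℝ lam b := hW ⟨u, M.smul_mem _ hx, hu, rfl⟩
  rw [segment_eq_image'] at hmem
  obtain ⟨θ, ⟨hθ, -⟩, hθu⟩ := hmem
  refine ⟨‖x‖ ^ 2 * θ, by positivity, ?_⟩
  have huu : ⟪u, u⟫ = 1 := by simp [inner_self_eq_norm_sq_to_K, hu]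
  set r := ‖x‖
  rw [hxu, map_smul, smul_comm lam, ← smul_sub, inner_smul_left, inner_smul_right,
    inner_sub_right, inner_smul_right, huu, ← hθu, Complex.conj_ofReal]
  simp only [Complex.real_smul]
  push_cast
  ring

lemma inner_sub_smul_eq_zero_of_compressionNumericalRange_subset_segment
    {A : H →L[ℂ] H} {M : Submodule ℂ H} {f : H} {lam b : ℂ}
    (hW : compressionNumericalRange A M ⊆ segment ℝ lam b) (hfM : f ∈ M) (hf : ‖f‖ = 1)
    (hlam : ⟪f, A f⟫ = lam) {y : H} (hy : y ∈ M) :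
    ⟪y, A f - lam • f⟫ = 0 := by
  set B : H →L[ℂ] H := A - lam • 1
  have hB : ∀ x, A x - lam • x = B x := fun x => rfl
  have hfBf : ⟪f, B f⟫ = 0 := by
    rw [← hB, inner_sub_right, inner_smul_right, hlam, inner_self_eq_norm_sq_to_K, hf]
    simp
  rw [hB]
  refine eq_zero_of_forall_mul_add_conj_mul_add_conj_mul_mul_eq_nonneg_mul (r := ⟪f, B y⟫)
    (s := ⟪y, B y⟫) (d := b - lam) fun t => ?_
  obtain ⟨c, hc, hcx⟩ :=
    inner_sub_smul_self_eq_nonneg_mul_of_compressionNumericalRange_subset_segment hW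
      (M.add_mem hfM (M.smul_mem t hy))
  refine ⟨c, hc, ?_⟩
  rw [← hcx, hB, map_add, map_smul, inner_add_left, inner_add_right, inner_add_right,
    inner_smul_left, inner_smul_right, inner_smul_left, inner_smul_right, hfBf]
  ring

end

theorem compression_eigenvalue_segment_endpoint_is_eigenvalue_general {H : Type*}
    [NormedAddCommGroup H] [InnerProductSpace ℂ H]
    (A : H →L[ℂ] H) (f : H) (lam : ℂ) (hf : ‖f‖ = 1) (hlam : ⟪f, A f⟫ = lam)
    (hseg : ∃ a b : ℂ, compressionNumericalRange A (Submodule.span ℂ {f, A f}) =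
      segment ℝ a b ∧ (lam = a ∨ lam = b)) :
    ∃ v : H, v ≠ 0 ∧ A v = lam • v := by
  set M := Submodule.span ℂ {f, A f}
  obtain ⟨b, hW⟩ : ∃ b, compressionNumericalRange A M ⊆ segment ℝ lam b := by
    obtain ⟨a, b, hW, rfl | rfl⟩ := hseg
    · exact ⟨b, hW.le⟩
    · exact ⟨a, (hW.trans (segment_symm ℝ a _)).le⟩
  have hfM : f ∈ M := Submodule.subset_span (Set.mem_insert _ _)
  have hAfM : A f ∈ M := Submodule.subset_span (Set.mem_insert_of_mem _ rfl)
  have hself : ⟪A f - lam • f, A f - lam • f⟫ = 0 :=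
    inner_sub_smul_eq_zero_of_compressionNumericalRange_subset_segment hW hfM hf hlam
      (M.sub_mem hAfM (M.smul_mem lam hfM))
  exact ⟨f, norm_ne_zero_iff.mp (by simp [hf]), sub_eq_zero.mp (inner_self_eq_zero.mp hself)⟩

/-- if `lam = ⟨Af, f⟩ ∈ ∂W(A)` (`‖f‖ = 1`), `M = span{f, Af}`, `g ∈ M` is a
unit eigenvector of the compression `PAP|_M` for the eigenvalue `lam` (expressed
projection-free: `⟨h, Ag⟩ = lam ⟨h, g⟩` for all `h ∈ M`), and the numerical range of the
compression is a line segment with `lam` an endpoint, then `lam` is an eigenvalue of `A`. -/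
theorem compression_eigenvalue_segment_endpoint_is_eigenvalue {H : Type*}
    [NormedAddCommGroup H] [InnerProductSpace ℂ H] [CompleteSpace H]
    (A : H →L[ℂ] H) (f g : H) (lam : ℂ) (hf : ‖f‖ = 1) (hlam : ⟪f, A f⟫ = lam)
    (hb : lam ∈ frontier (numericalRange A))
    (hgM : g ∈ Submodule.span ℂ {f, A f}) (hg : ‖g‖ = 1)
    (heig : ∀ h ∈ Submodule.span ℂ {f, A f}, ⟪h, A g⟫ = lam * ⟪h, g⟫)
    (hseg : ∃ a b : ℂ, compressionNumericalRange A (Submodule.span ℂ {f, A f}) =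
      segment ℝ a b ∧ (lam = a ∨ lam = b)) :
    ∃ v : H, v ≠ 0 ∧ A v = lam • v :=
  compression_eigenvalue_segment_endpoint_is_eigenvalue_general A f lam hf hlam hseg
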